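/- arXiv:2202.01666 — 2 statements merged into one kernel-verified Lean document; each statement's English description precedes it below -/
import Mathlib

section
/- For M > 0 and positive weights pᵢ summing to 1, the convex conjugate of A(f) = M − ∏ᵢ (M − fᵢ)^{pᵢ} on {f : f ≤ M·1} is A*(λ) = M(∑ᵢ λᵢ − 1) if λ ≥ 0 and ∏ᵢ (λᵢ/pᵢ)^{pᵢ} ≥ 1, and +∞ otherwise. -/
/-!
Substituting `g = M·1 - f` turns `⟨λ, f⟩ - A(f)` into `M (∑ λᵢ - 1) - (⟨λ, g⟩ - ∏ gᵢ ^ pᵢ)` over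
`g ≥ 0`. If `λ ≥ 0` and `∏ (λᵢ / pᵢ) ^ pᵢ ≥ 1`, weighted AM–GM makes the bracket nonnegative, and it
vanishes at `g = 0`. Otherwise the bracket takes a negative value (at a coordinate vector if some
`λⱼ < 0`, at a vector that is large only where `λⱼ = 0`, or at `g = p / λ` if `λ > 0`), and since
`∑ pᵢ = 1` it is positively homogeneous, so scaling that vector drives it to `-∞`.
-/

open Finset Real

section AmGmGap

variable {ι : Type*} [Fintype ι] {p l g : ι → ℝ}

theorem prod_div_rpow_mul_prod_rpow_le_sum_mul (hp : ∀ i, 0 < p i) (hpsum : ∑ i, p i = 1)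
    (hl : ∀ i, 0 ≤ l i) (hg : ∀ i, 0 ≤ g i) :
    (∏ i, (l i / p i) ^ p i) * ∏ i, g i ^ p i ≤ ∑ i, l i * g i :=
  calc (∏ i, (l i / p i) ^ p i) * ∏ i, g i ^ p i = ∏ i, (l i * g i / p i) ^ p i := by
        rw [← prod_mul_distrib]
        refine prod_congr rfl fun i _ => ?_
        rw [← mul_rpow (div_nonneg (hl i) (hp i).le) (hg i), div_mul_eq_mul_div]
    _ ≤ ∑ i, p i * (l i * g i / p i) :=
        geom_mean_le_arith_mean_weighted _ _ _ (fun i _ => (hp i).le) hpsum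
          fun i _ => div_nonneg (mul_nonneg (hl i) (hg i)) (hp i).le
    _ = ∑ i, l i * g i := sum_congr rfl fun i _ => mul_div_cancel₀ _ (hp i).ne'

variable (p l) in
noncomputable def amgmGap (g : ι → ℝ) : ℝ := ∑ i, l i * g i - ∏ i, g i ^ p i

theorem amgmGap_nonneg (hp : ∀ i, 0 < p i) (hpsum : ∑ i, p i = 1) (hl : ∀ i, 0 ≤ l i)
    (hK : 1 ≤ ∏ i, (l i / p i) ^ p i) (hg : ∀ i, 0 ≤ g i) : 0 ≤ amgmGap p l g := by
  have hG : 0 ≤ ∏ i, g i ^ p i := prod_nonneg fun i _ => rpow_nonneg (hg i) _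
  exact sub_nonneg.2 <|
    (le_mul_of_one_le_left hG hK).trans (prod_div_rpow_mul_prod_rpow_le_sum_mul hp hpsum hl hg)

theorem amgmGap_zero (hp : ∀ i, 0 < p i) (hpsum : ∑ i, p i = 1) : amgmGap p l 0 = 0 := by
  obtain ⟨j, -, -⟩ := exists_ne_zero_of_sum_ne_zero (hpsum ▸ one_ne_zero)
  simp only [amgmGap, Pi.zero_apply, mul_zero, sum_const_zero, zero_sub, neg_eq_zero]
  exact prod_eq_zero (mem_univ j) (zero_rpow (hp j).ne')

theorem amgmGap_smul (hpsum : ∑ i, p i = 1) (hg : ∀ i, 0 ≤ g i) {t : ℝ} (ht : 0 < t) :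
    amgmGap p l (t • g) = t * amgmGap p l g := by
  have hprod : ∏ i, (t * g i) ^ p i = t * ∏ i, g i ^ p i := by
    simp_rw [mul_rpow ht.le (hg _), prod_mul_distrib]
    rw [← rpow_sum_of_pos ht, hpsum, rpow_one]
  simp only [amgmGap, Pi.smul_apply, smul_eq_mul, hprod, mul_sub, mul_sum, mul_left_comm t]

theorem amgmGap_pi_single_neg [DecidableEq ι] {j : ι} (hj : l j < 0) :
    amgmGap p l (Pi.single j 1) < 0 := by
  have hsingle : 0 ≤ (Pi.single j 1 : ι → ℝ) := Pi.single_nonneg.2 zero_le_one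
  have hG : 0 ≤ ∏ i, (Pi.single j 1 : ι → ℝ) i ^ p i :=
    prod_nonneg fun i _ => rpow_nonneg (hsingle i) _
  have hsum : ∑ i, l i * (Pi.single j 1 : ι → ℝ) i = l j := by
    rw [Fintype.sum_eq_single j fun i hij => by simp [hij]]
    simp
  rw [amgmGap, hsum]
  linarith

theorem amgmGap_update_neg [DecidableEq ι] (hp : ∀ i, 0 < p i) (hl : ∀ i, 0 ≤ l i) {j : ι}
    (hj : l j = 0) :
    amgmGap p l (Function.update (1 : ι → ℝ) j ((∑ i, l i + 1) ^ (p j)⁻¹)) < 0 := by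
  set s := (∑ i, l i + 1) ^ (p j)⁻¹
  have hsum : ∑ i, l i * Function.update (1 : ι → ℝ) j s i = ∑ i, l i := by
    refine sum_congr rfl fun i _ => ?_
    rcases eq_or_ne i j with rfl | hij
    · simp [hj]
    · simp [hij]
  have hprod : ∏ i, Function.update (1 : ι → ℝ) j s i ^ p i = ∑ i, l i + 1 := by
    rw [Fintype.prod_eq_single j fun i hij => by simp [hij], Function.update_self]
    have : 0 ≤ ∑ i, l i := sum_nonneg fun i _ => hl i
    exact rpow_inv_rpow (by linarith) (hp j).ne'
  rw [amgmGap, hsum, hprod]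
  linarith

theorem amgmGap_div_neg (hp : ∀ i, 0 < p i) (hpsum : ∑ i, p i = 1) (hl : ∀ i, 0 < l i)
    (hK : ∏ i, (l i / p i) ^ p i < 1) : amgmGap p l (fun i => p i / l i) < 0 := by
  have hsum : ∑ i, l i * (p i / l i) = 1 := by
    rw [← hpsum]; exact sum_congr rfl fun i _ => mul_div_cancel₀ _ (hl i).ne'
  have hprod : ∏ i, (p i / l i) ^ p i = (∏ i, (l i / p i) ^ p i)⁻¹ := by
    rw [← prod_inv_distrib]
    exact prod_congr rfl fun i _ => by rw [← inv_div, inv_rpow (div_pos (hl i) (hp i)).le]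
  have hK0 : 0 < ∏ i, (l i / p i) ^ p i :=
    prod_pos fun i _ => rpow_pos_of_pos (div_pos (hl i) (hp i)) _
  rw [amgmGap, hsum, hprod, sub_neg]
  exact one_lt_inv_iff₀.2 ⟨hK0, hK⟩

theorem exists_amgmGap_neg (hp : ∀ i, 0 < p i) (hpsum : ∑ i, p i = 1)
    (h : ¬((∀ i, 0 ≤ l i) ∧ 1 ≤ ∏ i, (l i / p i) ^ p i)) :
    ∃ g : ι → ℝ, (∀ i, 0 ≤ g i) ∧ amgmGap p l g < 0 := by
  classical
  by_cases hl : ∀ i, 0 ≤ l i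
  swap
  · obtain ⟨j, hj⟩ := not_forall.1 hl
    exact ⟨Pi.single j 1, (Pi.single_nonneg.2 zero_le_one : 0 ≤ (Pi.single j 1 : ι → ℝ)),
      amgmGap_pi_single_neg (not_le.1 hj)⟩
  by_cases hz : ∃ j, l j = 0
  · obtain ⟨j, hj⟩ := hz
    refine ⟨_, fun i => ?_, amgmGap_update_neg hp hl hj⟩
    rcases eq_or_ne i j with rfl | hij
    · simp only [Function.update_self]
      exact rpow_nonneg (add_nonneg (sum_nonneg fun i _ => hl i) zero_le_one) _
    · simp [hij]
  · have hlpos i : 0 < l i := (hl i).lt_of_ne' fun h0 => hz ⟨i, h0⟩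
    exact ⟨fun i => p i / l i, fun i => (div_pos (hp i) (hlpos i)).le,
      amgmGap_div_neg hp hpsum hlpos (not_le.1 fun hK => h ⟨hl, hK⟩)⟩

theorem exists_amgmGap_lt (hp : ∀ i, 0 < p i) (hpsum : ∑ i, p i = 1)
    (h : ¬((∀ i, 0 ≤ l i) ∧ 1 ≤ ∏ i, (l i / p i) ^ p i)) (B : ℝ) :
    ∃ g : ι → ℝ, (∀ i, 0 ≤ g i) ∧ amgmGap p l g < B := by
  obtain ⟨g, hg, hneg⟩ := exists_amgmGap_neg hp hpsum h
  set t := max 1 (B / amgmGap p l g + 1)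
  have ht : 0 < t := lt_max_of_lt_left one_pos
  refine ⟨t • g, fun i => mul_nonneg ht.le (hg i), ?_⟩
  rw [amgmGap_smul hpsum hg ht, ← div_lt_iff_of_neg hneg]
  exact (lt_add_one _).trans_le (le_max_right _ _)

noncomputable def propfairMean (M : ℝ) (p f : ι → ℝ) : ℝ := M - ∏ i, (M - f i) ^ p i

theorem sum_mul_sub_propfairMean (M : ℝ) (p l f : ι → ℝ) :
    ∑ i, l i * f i - propfairMean M p f =
      M * (∑ i, l i - 1) - amgmGap p l (fun i => M - f i) := by
  simp only [propfairMean, amgmGap, mul_sub, sum_sub_distrib, ← sum_mul]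
  ring

end AmGmGap

theorem conjugate_of_propfair_mean_general
    (n : ℕ) (M : ℝ)
    (p : Fin n → ℝ) (hp : ∀ i, 0 < p i) (hpsum : ∑ i, p i = 1)
    (l : Fin n → ℝ) :
    (((∀ i, 0 ≤ l i) ∧ 1 ≤ ∏ i, (l i / p i) ^ (p i)) →
      IsGreatest (Set.range fun f : {f : Fin n → ℝ // ∀ i, f i ≤ M} =>
          ∑ i, l i * f.1 i - (M - ∏ i, (M - f.1 i) ^ (p i)))
        (M * (∑ i, l i - 1))) ∧
    (¬ ((∀ i, 0 ≤ l i) ∧ 1 ≤ ∏ i, (l i / p i) ^ (p i)) →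
      ¬ BddAbove (Set.range fun f : {f : Fin n → ℝ // ∀ i, f i ≤ M} =>
          ∑ i, l i * f.1 i - (M - ∏ i, (M - f.1 i) ^ (p i)))) := by
  have hobj (f : {f : Fin n → ℝ // ∀ i, f i ≤ M}) :
      ∑ i, l i * f.1 i - (M - ∏ i, (M - f.1 i) ^ (p i)) =
        M * (∑ i, l i - 1) - amgmGap p l (fun i => M - f.1 i) :=
    sum_mul_sub_propfairMean M p l f.1
  simp only [hobj]
  refine ⟨fun ⟨hl, hK⟩ => ⟨⟨⟨fun _ => M, fun _ => le_rfl⟩, ?_⟩, ?_⟩, fun h => ?_⟩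
  · simp only [sub_self, ← Pi.zero_def, amgmGap_zero hp hpsum, sub_zero]
  · rintro _ ⟨f, rfl⟩
    have := amgmGap_nonneg hp hpsum hl hK fun i => sub_nonneg.2 (f.2 i)
    linarith
  · refine not_bddAbove_iff.2 fun B => ?_
    obtain ⟨g, hg, hlt⟩ := exists_amgmGap_lt hp hpsum h (M * (∑ i, l i - 1) - B)
    refine ⟨_, ⟨⟨fun i => M - g i, fun i => sub_le_self M (hg i)⟩, rfl⟩, ?_⟩
    simp only [sub_sub_cancel]
    linarith

/-- Convex conjugate of PropFair's generalized mean `A(f) = M − ∏ i, (M − f i) ^ (p i)`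
on `{f : f ≤ M·1}`: the supremum of `⟨λ, f⟩ − A(f)` equals `M (∑ i, λ i − 1)`
(attained) if `λ ≥ 0` and `∏ i, (λ i / p i) ^ (p i) ≥ 1`, and is `+∞` (unbounded
above) otherwise. -/
theorem conjugate_of_propfair_mean
    (n : ℕ) (M : ℝ) (hM : 0 < M)
    (p : Fin n → ℝ) (hp : ∀ i, 0 < p i) (hpsum : ∑ i, p i = 1)
    (l : Fin n → ℝ) :
    (((∀ i, 0 ≤ l i) ∧ 1 ≤ ∏ i, (l i / p i) ^ (p i)) →
      IsGreatest (Set.range fun f : {f : Fin n → ℝ // ∀ i, f i ≤ M} =>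
          ∑ i, l i * f.1 i - (M - ∏ i, (M - f.1 i) ^ (p i)))
        (M * (∑ i, l i - 1))) ∧
    (¬ ((∀ i, 0 ≤ l i) ∧ 1 ≤ ∏ i, (l i / p i) ^ (p i)) →
      ¬ BddAbove (Set.range fun f : {f : Fin n → ℝ // ∀ i, f i ≤ M} =>
          ∑ i, l i * f.1 i - (M - ∏ i, (M - f.1 i) ^ (p i)))) :=
  conjugate_of_propfair_mean_general n M p hp hpsum l
end

section
/- Let a₀ = 0 and a_j ≤ (1 + 1/K) a_{j−1} + c for j = 1,...,K−1 with K ≥ 1 and c ≥ 0. Then ∑_{j=0}^{K−1} a_j ≤ (e − 2) K² c. -/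
/-!
Unrolling `a (j+1) ≤ r * a j + c` from `a 0 = 0` gives `a j ≤ (1 + r + ⋯ + r^(j-1)) c`. For
`r = 1 + 1/K` the double geometric sum `∑_{j<K} ∑_{i<j} r^i` equals `K² (r^K - 2)`, and
`r^K = (1 + 1/K)^K ≤ e`.
-/

open Finset Real

theorem le_geom_sum_mul_of_le_mul_add {R : Type*} [Semiring R] [PartialOrder R]
    [IsOrderedRing R] {n : ℕ} {r c : R} {a : ℕ → R} (hr : 0 ≤ r) (ha0 : a 0 = 0)
    (hrec : ∀ j, j + 1 < n → a (j + 1) ≤ r * a j + c) :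
    ∀ j < n, a j ≤ (∑ i ∈ range j, r ^ i) * c := by
  intro j hj
  induction j with
  | zero => simp [ha0]
  | succ j ih =>
    calc a (j + 1) ≤ r * a j + c := hrec j hj
      _ ≤ r * ((∑ i ∈ range j, r ^ i) * c) + c := by gcongr; exact ih (by omega)
      _ = (∑ i ∈ range (j + 1), r ^ i) * c := by rw [geom_sum_succ, add_mul, one_mul, mul_assoc]

theorem sq_sub_one_mul_sum_geom_sum {R : Type*} [CommRing R] (x : R) (n : ℕ) :
    (x - 1) ^ 2 * ∑ j ∈ range n, ∑ i ∈ range j, x ^ i = x ^ n - 1 - n * (x - 1) := by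
  induction n with
  | zero => simp
  | succ n ih =>
    have hgeom := geom_sum_mul x n
    rw [sum_range_succ, mul_add, ih]
    push_cast
    linear_combination (x - 1) * hgeom

theorem sum_geom_sum_one_add_inv_le (n : ℕ) :
    ∑ j ∈ range n, ∑ i ∈ range j, (1 + (n : ℝ)⁻¹) ^ i ≤ (exp 1 - 2) * n ^ 2 := by
  rcases n.eq_zero_or_pos with rfl | hn
  · simp
  have hn' : (n : ℝ) ≠ 0 := by positivity
  have hsum : ∑ j ∈ range n, ∑ i ∈ range j, (1 + (n : ℝ)⁻¹) ^ i
      = n ^ 2 * ((1 + (n : ℝ)⁻¹) ^ n - 2) := by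
    have h := sq_sub_one_mul_sum_geom_sum (1 + (n : ℝ)⁻¹) n
    rw [add_sub_cancel_left, inv_pow] at h
    field_simp at h ⊢
    linear_combination h
  rw [hsum]
  nlinarith [one_add_inv_pow_le_exp (n := n), sq_nonneg (n : ℝ)]

theorem recursive_sequence_sum_bound_general
    (K : ℕ) (c : ℝ) (hc : 0 ≤ c) (a : ℕ → ℝ)
    (ha0 : a 0 = 0)
    (hrec : ∀ j, 1 ≤ j → j ≤ K - 1 → a j ≤ (1 + 1 / (K : ℝ)) * a (j - 1) + c) :
    ∑ j ∈ Finset.range K, a j ≤ (Real.exp 1 - 2) * (K : ℝ) ^ 2 * c := by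
  rw [one_div] at hrec
  have hunroll : ∀ j < K, a j ≤ (∑ i ∈ range j, (1 + (K : ℝ)⁻¹) ^ i) * c :=
    le_geom_sum_mul_of_le_mul_add (by positivity) ha0 fun j hj => hrec (j + 1) (by omega) (by omega)
  calc ∑ j ∈ range K, a j
      ≤ ∑ j ∈ range K, (∑ i ∈ range j, (1 + (K : ℝ)⁻¹) ^ i) * c :=
        sum_le_sum fun j hj => hunroll j (mem_range.mp hj)
    _ = (∑ j ∈ range K, ∑ i ∈ range j, (1 + (K : ℝ)⁻¹) ^ i) * c := (sum_mul ..).symm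
    _ ≤ (exp 1 - 2) * K ^ 2 * c := by gcongr; exact sum_geom_sum_one_add_inv_le K

/-- If `a 0 = 0` and `a j ≤ (1 + 1/K) a (j−1) + c` for `j = 1, …, K−1` (with `K ≥ 1`,
`c ≥ 0`), then `∑_{j=0}^{K−1} a j ≤ (e − 2) K² c`. -/
theorem recursive_sequence_sum_bound
    (K : ℕ) (hK : 1 ≤ K) (c : ℝ) (hc : 0 ≤ c) (a : ℕ → ℝ)
    (ha0 : a 0 = 0)
    (hrec : ∀ j, 1 ≤ j → j ≤ K - 1 → a j ≤ (1 + 1 / (K : ℝ)) * a (j - 1) + c) :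
    ∑ j ∈ Finset.range K, a j ≤ (Real.exp 1 - 2) * (K : ℝ) ^ 2 * c :=
  recursive_sequence_sum_bound_general K c hc a ha0 hrec
end
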